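/- arXiv:2503.23267 — 9 statements merged into one kernel-verified Lean document; each statement's English description precedes it below -/
import Mathlib

section
/- Let α : ℝ → ℝ be a continuous, strictly increasing function with α(0) = 0, and let t₀ ≤ t₁ be real numbers. Let b : ℝ → ℝ be differentiable on [t₀, t₁] with derivative b'(t) ≥ -α(b(t)) for all t ∈ [t₀, t₁]. If b(t₀) ≥ 0, then b(t) ≥ 0 for all t ∈ [t₀, t₁]. -/
/-!
Fix `s ∈ [t₀, t₁]` and let `c` be the last time in `[t₀, s]` at which `b ≥ 0` (it exists since
`b` is continuous and `b t₀ ≥ 0`). On `(c, s]` we have `b < 0`, hence `α (b t) < 0` and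
`b' t ≥ -α (b t) > 0`, so `b` is monotone on `[c, s]` and `b s ≥ b c ≥ 0`.
-/

open Set

theorem exists_last_nonneg_of_continuousOn {f : ℝ → ℝ} {a s : ℝ}
    (hf : ContinuousOn f (Icc a s)) (ha : a ≤ s) (hfa : 0 ≤ f a) :
    ∃ c ∈ Icc a s, 0 ≤ f c ∧ ∀ t ∈ Ioc c s, f t < 0 := by
  set S := Icc a s ∩ f ⁻¹' Ici 0
  have hS_closed : IsClosed S := hf.preimage_isClosed_of_isClosed isClosed_Icc isClosed_Ici
  have hS_bdd : BddAbove S := ⟨s, fun _ hx ↦ hx.1.2⟩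
  have hcS : sSup S ∈ S := hS_closed.csSup_mem ⟨a, ⟨left_mem_Icc.2 ha, hfa⟩⟩ hS_bdd
  refine ⟨sSup S, hcS.1, hcS.2, fun t ht ↦ not_le.1 fun hft ↦ ?_⟩
  have htS : t ∈ S := ⟨⟨hcS.1.1.trans ht.1.le, ht.2⟩, hft⟩
  exact (le_csSup hS_bdd htS).not_gt ht.1

theorem nonneg_of_hasDerivWithinAt_nonneg_of_neg {f f' : ℝ → ℝ} {a b : ℝ}
    (hf : ∀ x ∈ Icc a b, HasDerivWithinAt f (f' x) (Icc a b) x)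
    (hf' : ∀ x ∈ Icc a b, f x < 0 → 0 ≤ f' x) (hfa : 0 ≤ f a) :
    ∀ s ∈ Icc a b, 0 ≤ f s := by
  intro s hs
  have hsub : ∀ c ∈ Icc a s, Icc c s ⊆ Icc a b := fun c hc ↦ Icc_subset_Icc hc.1 hs.2
  have hf_cont : ContinuousOn f (Icc a b) := fun x hx ↦ (hf x hx).continuousWithinAt
  obtain ⟨c, hc, hfc, hneg⟩ :=
    exists_last_nonneg_of_continuousOn (hf_cont.mono (hsub a ⟨le_rfl, hs.1⟩)) hs.1 hfa
  have hint : interior (Icc c s) ⊆ Icc a b := interior_subset.trans (hsub c hc)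
  have hmono : MonotoneOn f (Icc c s) := by
    refine monotoneOn_of_hasDerivWithinAt_nonneg (convex_Icc c s) (hf_cont.mono (hsub c hc))
      (fun x hx ↦ (hf x (hint hx)).mono hint) (fun x hx ↦ hf' x (hint hx) (hneg x ?_))
    rw [interior_Icc] at hx
    exact Ioo_subset_Ioc_self hx
  exact hfc.trans (hmono (left_mem_Icc.2 hc.2) (right_mem_Icc.2 hc.2) hc.2)

theorem comparison_lemma_barrier_general
    (α : ℝ → ℝ) (hαm : StrictMono α) (hα0 : α 0 = 0)
    (t₀ t₁ : ℝ)
    (b b' : ℝ → ℝ)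
    (hderiv : ∀ t ∈ Set.Icc t₀ t₁, HasDerivWithinAt b (b' t) (Set.Icc t₀ t₁) t)
    (hineq : ∀ t ∈ Set.Icc t₀ t₁, -α (b t) ≤ b' t)
    (hinit : 0 ≤ b t₀) :
    ∀ t ∈ Set.Icc t₀ t₁, 0 ≤ b t := by
  refine nonneg_of_hasDerivWithinAt_nonneg_of_neg hderiv (fun t ht hbt ↦ ?_) hinit
  have hα_neg : α (b t) < 0 := hα0 ▸ hαm hbt
  linarith [hineq t ht]

/-- Comparison lemma (Lemma 1): if `b` is differentiable on `[t₀, t₁]` with derivative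
`b' t ≥ -α (b t)` for an extended class κ function `α`, and `b t₀ ≥ 0`, then `b t ≥ 0`
on `[t₀, t₁]`. -/
theorem comparison_lemma_barrier
    (α : ℝ → ℝ) (hαc : Continuous α) (hαm : StrictMono α) (hα0 : α 0 = 0)
    (t₀ t₁ : ℝ) (ht : t₀ ≤ t₁)
    (b b' : ℝ → ℝ)
    (hderiv : ∀ t ∈ Set.Icc t₀ t₁, HasDerivWithinAt b (b' t) (Set.Icc t₀ t₁) t)
    (hineq : ∀ t ∈ Set.Icc t₀ t₁, -α (b t) ≤ b' t)
    (hinit : 0 ≤ b t₀) :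
    ∀ t ∈ Set.Icc t₀ t₁, 0 ≤ b t :=
  comparison_lemma_barrier_general α hαm hα0 t₀ t₁ b b' hderiv hineq hinit
end

section
/- Let m ≥ 1 be a natural number, and for each i ∈ {1, …, m} let αᵢ : ℝ → ℝ be a continuous, strictly increasing function with αᵢ(0) = 0. Let ψ₀, ψ₁, …, ψₘ : ℝ → ℝ be functions such that for each i ∈ {0, …, m−1}, ψᵢ is differentiable on [0, ∞) and ψ_{i+1}(t) = ψᵢ'(t) + α_{i+1}(ψᵢ(t)) for all t ≥ 0. If ψₘ(t) ≥ 0 for all t ≥ 0 and ψᵢ(0) ≥ 0 for every i ∈ {0, …, m−1}, then ψᵢ(t) ≥ 0 for all t ≥ 0 and every i ∈ {0, …, m−1}; in particular ψ₀(t) ≥ 0 for all t ≥ 0. -/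
/-!
Each link `ψ i' = ψ (i+1) - α (i+1) (ψ i)` with `ψ (i+1) ≥ 0` forces `ψ i` to increase strictly
wherever it is negative, because `α (i+1)` is negative on negative arguments; starting from
`ψ i 0 ≥ 0`, it can therefore never become negative. Nonnegativity thus propagates down the chain
from `ψ m` to `ψ 0`.
-/

open Set

theorem nonneg_of_deriv_pos_of_neg {f f' : ℝ → ℝ} {a b : ℝ} (hf : ContinuousOn f (Icc a b))
    (hf' : ∀ x ∈ Ico a b, HasDerivWithinAt f (f' x) (Ici x) x) (ha : 0 ≤ f a)
    (hpos : ∀ x ∈ Ico a b, f x < 0 → 0 < f' x) :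
    ∀ ⦃x⦄, x ∈ Icc a b → 0 ≤ f x := by
  intro x hx
  suffices h : ∀ ε > 0, -f x ≤ ε from
    neg_nonpos.1 (le_of_forall_pos_le_add fun ε hε => by simpa using h ε hε)
  -- Fence `-f` by the constant `ε`: at a contact point `f = -ε < 0`, so `-f` strictly decreases.
  intro ε hε
  refine image_le_of_deriv_right_lt_deriv_boundary (f := fun y => -f y) (B := fun _ => ε)
    hf.neg (fun y hy => (hf' y hy).neg) (by linarith) (fun _ => hasDerivAt_const _ _) ?_ hx
  intro y hy hcontact
  simpa using hpos y hy (by linarith)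

theorem nonneg_of_hasDerivWithinAt_sub_of_neg {a g ψ : ℝ → ℝ} (ha : ∀ y < 0, a y < 0)
    (hg : ∀ t ≥ (0 : ℝ), 0 ≤ g t)
    (hψ : ∀ t ≥ (0 : ℝ), HasDerivWithinAt ψ (g t - a (ψ t)) (Ici 0) t) (h0 : 0 ≤ ψ 0) :
    ∀ t ≥ (0 : ℝ), 0 ≤ ψ t := fun t ht =>
  nonneg_of_deriv_pos_of_neg
    (fun x hx => (hψ x hx.1).continuousWithinAt.mono Icc_subset_Ici_self)
    (fun x hx => (hψ x hx.1).mono (Ici_subset_Ici.2 hx.1)) h0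
    (fun x hx hneg => by linarith [hg x hx.1, ha _ hneg]) ⟨ht, le_rfl⟩

theorem hocbf_chain_nonneg_general
    (m : ℕ)
    (α : ℕ → ℝ → ℝ)
    (hα : ∀ i, 1 ≤ i → i ≤ m →
      Continuous (α i) ∧ StrictMono (α i) ∧ α i 0 = 0)
    (ψ : ℕ → ℝ → ℝ)
    (hchain : ∀ i < m, ∀ t ≥ (0 : ℝ),
      HasDerivWithinAt (ψ i) (ψ (i + 1) t - α (i + 1) (ψ i t)) (Set.Ici 0) t)
    (htop : ∀ t ≥ (0 : ℝ), 0 ≤ ψ m t)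
    (hinit : ∀ i < m, 0 ≤ ψ i 0) :
    (∀ i < m, ∀ t ≥ (0 : ℝ), 0 ≤ ψ i t) ∧ (∀ t ≥ (0 : ℝ), 0 ≤ ψ 0 t) := by
  have hstep : ∀ i < m, (∀ t ≥ (0 : ℝ), 0 ≤ ψ (i + 1) t) → ∀ t ≥ (0 : ℝ), 0 ≤ ψ i t := by
    intro i hi hnext
    obtain ⟨-, hmono, hzero⟩ := hα (i + 1) (Nat.le_add_left 1 i) hi
    have hneg : ∀ y < 0, α (i + 1) y < 0 := fun y hy => hzero ▸ hmono hy
    exact nonneg_of_hasDerivWithinAt_sub_of_neg hneg hnext (hchain i hi) (hinit i hi)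
  have hall : ∀ i ≤ m, ∀ t ≥ (0 : ℝ), 0 ≤ ψ i t := fun i hi =>
    Nat.decreasingInduction (motive := fun i _ => ∀ t ≥ (0 : ℝ), 0 ≤ ψ i t)
      (fun k hk => hstep k hk) htop hi
  exact ⟨fun i hi => hall i hi.le, hall 0 m.zero_le⟩

/-- HOCBF safety guarantee along a trajectory (Theorem 1, scalar-in-time form).
Given extended class κ functions `α 1, …, α m` and a chain
`ψ (i+1) t = (ψ i)' t + α (i+1) (ψ i t)` (each `ψ i`, `i < m`, differentiable on `[0, ∞)`),
if `ψ m t ≥ 0` for all `t ≥ 0` and `ψ i 0 ≥ 0` for all `i < m`, then `ψ i t ≥ 0`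
for all `t ≥ 0` and all `i < m`; in particular `ψ 0 t ≥ 0`. -/
theorem hocbf_chain_nonneg
    (m : ℕ) (hm : 1 ≤ m)
    (α : ℕ → ℝ → ℝ)
    (hα : ∀ i, 1 ≤ i → i ≤ m →
      Continuous (α i) ∧ StrictMono (α i) ∧ α i 0 = 0)
    (ψ : ℕ → ℝ → ℝ)
    (hchain : ∀ i < m, ∀ t ≥ (0 : ℝ),
      HasDerivWithinAt (ψ i) (ψ (i + 1) t - α (i + 1) (ψ i t)) (Set.Ici 0) t)
    (htop : ∀ t ≥ (0 : ℝ), 0 ≤ ψ m t)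
    (hinit : ∀ i < m, 0 ≤ ψ i 0) :
    (∀ i < m, ∀ t ≥ (0 : ℝ), 0 ≤ ψ i t) ∧ (∀ t ≥ (0 : ℝ), 0 ≤ ψ 0 t) :=
  hocbf_chain_nonneg_general m α hα ψ hchain htop hinit
end

section
/- Let n, q be positive natural numbers and m ≥ 1. Let f : ℝⁿ → ℝⁿ and g : ℝⁿ → ℝ^{n×q} be functions, let u : ℝ → ℝ^q be a control signal, and let x : ℝ → ℝⁿ be a trajectory satisfying x'(t) = f(x(t)) + g(x(t)) u(t) for all t ≥ 0. For each i ∈ {1, …, m} let αᵢ : ℝ → ℝ be a continuous, strictly increasing function with αᵢ(0) = 0. Let ψ₀, …, ψ_{m−1} : ℝⁿ → ℝ be continuously differentiable functions satisfying, for every i ∈ {0, …, m−2} and every z ∈ ℝⁿ: (a) Dψᵢ(z)(g(z) w) = 0 for every w ∈ ℝ^q (relative-degree condition), and (b) ψ_{i+1}(z) = Dψᵢ(z)(f(z)) + α_{i+1}(ψᵢ(z)). Suppose the highest-order inequality Dψ_{m−1}(x(t))(f(x(t)) + g(x(t)) u(t)) + αₘ(ψ_{m−1}(x(t))) ≥ 0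 holds for all t ≥ 0, and ψᵢ(x(0)) ≥ 0 for every i ∈ {0, …, m−1}. Then ψᵢ(x(t)) ≥ 0 for all t ≥ 0 and every i ∈ {0, …, m−1}; in particular ψ₀(x(t)) ≥ 0 for all t ≥ 0. -/
/-!
Each `ψ i` is a first-order barrier along the trajectory: by the relative-degree condition the
input drops out of `d/dt ψ i (x t)` for `i < m - 1`, so the chain rule and the recursion give
`d/dt ψ i (x t) + α (i+1) (ψ i (x t)) = ψ (i+1) (x t)`, while for `i = m - 1` the left side is
nonnegative by hypothesis. A real function whose derivative is nonnegative wherever it is negative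
cannot leave `[0, ∞)`, so nonnegativity propagates downwards from `ψ (m-1)` to `ψ 0`.
-/

open Set

theorem nonneg_of_hasDerivAt_of_deriv_nonneg_of_neg {y y' : ℝ → ℝ} {a : ℝ}
    (hy : ∀ t ≥ a, HasDerivAt y (y' t) t) (hy' : ∀ t ≥ a, y t < 0 → 0 ≤ y' t)
    (ha : 0 ≤ y a) : ∀ t ≥ a, 0 ≤ y t := by
  intro b hb
  have hcont : ContinuousOn y (Ici a) := fun t ht => (hy t ht).continuousAt.continuousWithinAt
  suffices Icc a b ⊆ y ⁻¹' Ici 0 from this ⟨hb, le_rfl⟩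
  refine IsClosed.Icc_subset_of_forall_exists_gt ?_ ha ?_
  · rw [inter_comm]
    exact (hcont.mono Icc_subset_Ici_self).preimage_isClosed_of_isClosed isClosed_Icc isClosed_Ici
  · rintro s ⟨hys, has, -⟩ z hsz
    by_contra hempty
    have hneg : ∀ r ∈ Ioc s z, y r < 0 := fun r hr => not_le.1 fun hyr => hempty ⟨r, hyr, hr⟩
    have hmono : MonotoneOn y (Icc s z) := by
      refine monotoneOn_of_hasDerivWithinAt_nonneg (f' := y') (convex_Icc s z)
        (hcont.mono fun r hr => has.trans hr.1) (fun r hr => ?_) (fun r hr => ?_)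
      all_goals rw [interior_Icc] at hr
      · exact (hy r (has.trans hr.1.le)).hasDerivWithinAt
      · exact hy' r (has.trans hr.1.le) (hneg r ⟨hr.1, hr.2.le⟩)
    exact (hneg z ⟨hsz, le_rfl⟩).not_ge <|
      (mem_Ici.1 hys).trans (hmono ⟨le_rfl, hsz.le⟩ ⟨hsz.le, le_rfl⟩ hsz.le)

theorem nonneg_comp_of_fderiv_add_nonneg {E : Type*} [NormedAddCommGroup E] [NormedSpace ℝ E]
    {h : E → ℝ} {x x' : ℝ → E} {α : ℝ → ℝ} {a : ℝ} (hα : ∀ r < 0, α r ≤ 0)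
    (hh : Differentiable ℝ h) (hx : ∀ t ≥ a, HasDerivAt x (x' t) t)
    (hineq : ∀ t ≥ a, 0 ≤ fderiv ℝ h (x t) (x' t) + α (h (x t))) (ha : 0 ≤ h (x a)) :
    ∀ t ≥ a, 0 ≤ h (x t) :=
  nonneg_of_hasDerivAt_of_deriv_nonneg_of_neg
    (fun t ht => (hh (x t)).hasFDerivAt.comp_hasDerivAt t (hx t ht))
    (fun t ht hneg => by linarith [hineq t ht, hα _ hneg]) ha

theorem hocbf_safety_guarantee_general
    (n q m : ℕ) (hm : 1 ≤ m)
    (f : (Fin n → ℝ) → (Fin n → ℝ))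
    (g : (Fin n → ℝ) → Matrix (Fin n) (Fin q) ℝ)
    (u : ℝ → (Fin q → ℝ)) (x : ℝ → (Fin n → ℝ))
    (hx : ∀ t ≥ (0 : ℝ), HasDerivAt x (f (x t) + (g (x t)).mulVec (u t)) t)
    (α : ℕ → ℝ → ℝ)
    (hα : ∀ i, 1 ≤ i → i ≤ m →
      Continuous (α i) ∧ StrictMono (α i) ∧ α i 0 = 0)
    (ψ : ℕ → (Fin n → ℝ) → ℝ)
    (hsmooth : ∀ i < m, ContDiff ℝ 1 (ψ i))
    (hreldeg : ∀ i, i + 1 < m → ∀ z : Fin n → ℝ, ∀ w : Fin q → ℝ,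
      fderiv ℝ (ψ i) z ((g z).mulVec w) = 0)
    (hchain : ∀ i, i + 1 < m → ∀ z : Fin n → ℝ,
      ψ (i + 1) z = fderiv ℝ (ψ i) z (f z) + α (i + 1) (ψ i z))
    (htop : ∀ t ≥ (0 : ℝ),
      0 ≤ fderiv ℝ (ψ (m - 1)) (x t) (f (x t) + (g (x t)).mulVec (u t))
            + α m (ψ (m - 1) (x t)))
    (hinit : ∀ i < m, 0 ≤ ψ i (x 0)) :
    (∀ i < m, ∀ t ≥ (0 : ℝ), 0 ≤ ψ i (x t)) ∧ (∀ t ≥ (0 : ℝ), 0 ≤ ψ 0 (x t)) := by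
  have hneg : ∀ i, 1 ≤ i → i ≤ m → ∀ r < 0, α i r ≤ 0 := fun i hi1 him r hr => by
    obtain ⟨-, hmono, hzero⟩ := hα i hi1 him
    exact hzero ▸ (hmono hr).le
  have hdiff : ∀ i < m, Differentiable ℝ (ψ i) := fun i hi =>
    (hsmooth i hi).differentiable one_ne_zero
  have hlast : ∀ t ≥ (0 : ℝ), 0 ≤ ψ (m - 1) (x t) :=
    nonneg_comp_of_fderiv_add_nonneg (hneg m hm le_rfl) (hdiff _ (by omega)) hx htop
      (hinit _ (by omega))
  have hstep : ∀ i < m - 1, (∀ t ≥ (0 : ℝ), 0 ≤ ψ (i + 1) (x t)) →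
      ∀ t ≥ (0 : ℝ), 0 ≤ ψ i (x t) := fun i hi hnext =>
    nonneg_comp_of_fderiv_add_nonneg (hneg (i + 1) (by omega) (by omega)) (hdiff i (by omega)) hx
      (fun t ht => by
        rw [map_add, hreldeg i (by omega), add_zero, ← hchain i (by omega)]
        exact hnext t ht)
      (hinit i (by omega))
  have hall : ∀ i < m, ∀ t ≥ (0 : ℝ), 0 ≤ ψ i (x t) := fun i hi =>
    Nat.decreasingInduction (motive := fun k _ => ∀ t ≥ (0 : ℝ), 0 ≤ ψ k (x t))
      hstep hlast (by omega : i ≤ m - 1)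
  exact ⟨hall, hall 0 (by omega)⟩

/-- Theorem 1 (HOCBF safety guarantee) stated along a trajectory of the affine control
system `ẋ = f x + g x * u`. The functions `ψ 0, …, ψ (m-1) : ℝⁿ → ℝ` are continuously
differentiable, satisfy the relative-degree condition `Dψᵢ(z)(g z w) = 0` and the chain
`ψ (i+1) z = Dψᵢ(z)(f z) + α (i+1) (ψ i z)` for `i ≤ m - 2`. If the highest-order HOCBF
inequality holds along the trajectory and all `ψ i (x 0) ≥ 0`, then `ψ i (x t) ≥ 0` for all
`t ≥ 0`; in particular `ψ 0 (x t) ≥ 0`. -/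
theorem hocbf_safety_guarantee
    (n q m : ℕ) (hn : 0 < n) (hq : 0 < q) (hm : 1 ≤ m)
    (f : (Fin n → ℝ) → (Fin n → ℝ))
    (g : (Fin n → ℝ) → Matrix (Fin n) (Fin q) ℝ)
    (u : ℝ → (Fin q → ℝ)) (x : ℝ → (Fin n → ℝ))
    (hx : ∀ t ≥ (0 : ℝ), HasDerivAt x (f (x t) + (g (x t)).mulVec (u t)) t)
    (α : ℕ → ℝ → ℝ)
    (hα : ∀ i, 1 ≤ i → i ≤ m →
      Continuous (α i) ∧ StrictMono (α i) ∧ α i 0 = 0)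
    (ψ : ℕ → (Fin n → ℝ) → ℝ)
    (hsmooth : ∀ i < m, ContDiff ℝ 1 (ψ i))
    (hreldeg : ∀ i, i + 1 < m → ∀ z : Fin n → ℝ, ∀ w : Fin q → ℝ,
      fderiv ℝ (ψ i) z ((g z).mulVec w) = 0)
    (hchain : ∀ i, i + 1 < m → ∀ z : Fin n → ℝ,
      ψ (i + 1) z = fderiv ℝ (ψ i) z (f z) + α (i + 1) (ψ i z))
    (htop : ∀ t ≥ (0 : ℝ),
      0 ≤ fderiv ℝ (ψ (m - 1)) (x t) (f (x t) + (g (x t)).mulVec (u t))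
            + α m (ψ (m - 1) (x t)))
    (hinit : ∀ i < m, 0 ≤ ψ i (x 0)) :
    (∀ i < m, ∀ t ≥ (0 : ℝ), 0 ≤ ψ i (x t)) ∧ (∀ t ≥ (0 : ℝ), 0 ≤ ψ 0 (x t)) :=
  hocbf_safety_guarantee_general n q m hm f g u x hx α hα ψ hsmooth hreldeg hchain htop hinit
end

section
/- Let m ≥ 1 and m_a ≥ 1 be natural numbers. For i ∈ {1, …, m} let αᵢ : ℝ → ℝ, and for j ∈ {1, …, m_a} let βⱼ : ℝ → ℝ, all continuous, strictly increasing functions with value 0 at 0. Let ψ₀, …, ψₘ : ℝ → ℝ and φ₀, …, φ_{m_a} : ℝ → ℝ be functions such that: each ψᵢ with i ∈ {0, …, m−1} and each φⱼ with j ∈ {0, …, m_a−1} is differentiable on [0, ∞); ψ_{i+1}(t) = ψᵢ'(t) + α_{i+1}(ψᵢ(t)) for all i ∈ {0, …, m−1} and t ≥ 0; φ₀ = ψₘ; and φ_{j+1}(t) = φⱼ'(t) + β_{j+1}(φⱼ(t)) for all j ∈ {0, …, m_a−1} and t ≥ 0. If φ_{m_a}(t) ≥ 0 for all t ≥ 0,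 ψᵢ(0) ≥ 0 for every i ∈ {0, …, m−1}, and φⱼ(0) ≥ 0 for every j ∈ {0, …, m_a−1}, then ψᵢ(t) ≥ 0 and φⱼ(t) ≥ 0 for all t ≥ 0, every i ∈ {0, …, m−1}, and every j ∈ {0, …, m_a−1}; in particular the safety function ψ₀ satisfies ψ₀(t) ≥ 0 for all t ≥ 0. -/
/-!
Each level `f` of either chain satisfies `f' = g - a ∘ f` with `g` the next level, and
`a` negative on negative arguments. So once the next level is nonnegative, `f` strictly
increases whenever it is negative and can never cross below zero. Descending induction
from the top of the FCBF chain, passing to the HOCBF chain through `φ 0 = ψ m`, makes every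
level nonnegative.
-/

open Set

/- At a first touch of `-f` with the fence `ε > 0` we have `f < 0`, so the derivative of `-f`
there is `a (f t) - g t < 0`. -/
theorem nonneg_of_hasDerivWithinAt_sub {f g a : ℝ → ℝ} {t₀ : ℝ} (ha : ∀ x < 0, a x < 0)
    (hf : ∀ t ≥ t₀, HasDerivWithinAt f (g t - a (f t)) (Ici t₀) t)
    (hg : ∀ t ≥ t₀, 0 ≤ g t) (h₀ : 0 ≤ f t₀) {t : ℝ} (ht : t₀ ≤ t) : 0 ≤ f t := by
  refine le_of_forall_pos_le_add fun ε hε => ?_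
  have hfence := image_le_of_deriv_right_lt_deriv_boundary' (f := fun s => -f s)
    (f' := fun s => -(g s - a (f s))) (B := fun _ => ε) (B' := 0)
    (fun s hs => ((hf s hs.1).continuousWithinAt.mono Icc_subset_Ici_self).neg)
    (fun s hs => (hf s hs.1).neg.mono (Ici_subset_Ici.2 hs.1))
    (by linarith) continuousOn_const (fun _ _ => hasDerivWithinAt_const _ _ _)
    (fun s hs htouch => by
      have hneg := ha (f s) (by linarith)
      have := hg s hs.1
      simp only [Pi.zero_apply]
      linarith)
    ⟨ht, le_rfl⟩
  linarith

theorem chain_nonneg {n : ℕ} {f a : ℕ → ℝ → ℝ} (ha : ∀ k < n, ∀ x < 0, a (k + 1) x < 0)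
    (hf : ∀ k < n, ∀ t ≥ (0 : ℝ),
      HasDerivWithinAt (f k) (f (k + 1) t - a (k + 1) (f k t)) (Ici 0) t)
    (htop : ∀ t ≥ (0 : ℝ), 0 ≤ f n t) (hinit : ∀ k < n, 0 ≤ f k 0) :
    ∀ k ≤ n, ∀ t ≥ (0 : ℝ), 0 ≤ f k t := by
  intro k hk
  induction hk using Nat.decreasingInduction with
  | self => exact htop
  | of_succ k hk hnext =>
    exact fun t ht => nonneg_of_hasDerivWithinAt_sub (ha k hk) (hf k hk) hnext (hinit k hk) ht

theorem StrictMono.lt_zero_of_map_zero {a : ℝ → ℝ} (ha : StrictMono a) (ha0 : a 0 = 0)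
    {x : ℝ} (hx : x < 0) : a x < 0 :=
  ha0 ▸ ha hx

theorem fcbf_safety_guarantee_general
    (m ma : ℕ)
    (α β : ℕ → ℝ → ℝ)
    (hα : ∀ i, 1 ≤ i → i ≤ m →
      Continuous (α i) ∧ StrictMono (α i) ∧ α i 0 = 0)
    (hβ : ∀ j, 1 ≤ j → j ≤ ma →
      Continuous (β j) ∧ StrictMono (β j) ∧ β j 0 = 0)
    (ψ φ : ℕ → ℝ → ℝ)
    (hψchain : ∀ i < m, ∀ t ≥ (0 : ℝ),
      HasDerivWithinAt (ψ i) (ψ (i + 1) t - α (i + 1) (ψ i t)) (Set.Ici 0) t)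
    (hbase : φ 0 = ψ m)
    (hφchain : ∀ j < ma, ∀ t ≥ (0 : ℝ),
      HasDerivWithinAt (φ j) (φ (j + 1) t - β (j + 1) (φ j t)) (Set.Ici 0) t)
    (htop : ∀ t ≥ (0 : ℝ), 0 ≤ φ ma t)
    (hψinit : ∀ i < m, 0 ≤ ψ i 0)
    (hφinit : ∀ j < ma, 0 ≤ φ j 0) :
    (∀ i < m, ∀ t ≥ (0 : ℝ), 0 ≤ ψ i t) ∧
    (∀ j < ma, ∀ t ≥ (0 : ℝ), 0 ≤ φ j t) ∧
    (∀ t ≥ (0 : ℝ), 0 ≤ ψ 0 t) := by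
  have hβneg : ∀ j < ma, ∀ x < 0, β (j + 1) x < 0 := fun j hj _ hx =>
    have ⟨_, hmono, hzero⟩ := hβ (j + 1) (by omega) hj
    hmono.lt_zero_of_map_zero hzero hx
  have hαneg : ∀ i < m, ∀ x < 0, α (i + 1) x < 0 := fun i hi _ hx =>
    have ⟨_, hmono, hzero⟩ := hα (i + 1) (by omega) hi
    hmono.lt_zero_of_map_zero hzero hx
  have hφ := chain_nonneg hβneg hφchain htop hφinit
  have hψ := chain_nonneg hαneg hψchain (hbase ▸ hφ 0 (Nat.zero_le _)) hψinit
  exact ⟨fun i hi => hψ i hi.le, fun j hj => hφ j hj.le, hψ 0 (Nat.zero_le _)⟩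

/-- Theorem 2 (FCBF safety guarantee, along-trajectory form). Two glued chains:
the HOCBF chain `ψ (i+1) t = (ψ i)' t + α (i+1) (ψ i t)` of relative degree `m`, and
the FCBF chain `φ (j+1) t = (φ j)' t + β (j+1) (φ j t)` of relative degree `m_a` with
base `φ 0 = ψ m`. Nonnegativity of the topmost FCBF inequality `φ m_a` together with
initial nonnegativity of all lower levels renders all levels nonnegative for all `t ≥ 0`;
in particular the safety function `ψ 0` stays nonnegative. -/
theorem fcbf_safety_guarantee
    (m ma : ℕ) (hm : 1 ≤ m) (hma : 1 ≤ ma)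
    (α β : ℕ → ℝ → ℝ)
    (hα : ∀ i, 1 ≤ i → i ≤ m →
      Continuous (α i) ∧ StrictMono (α i) ∧ α i 0 = 0)
    (hβ : ∀ j, 1 ≤ j → j ≤ ma →
      Continuous (β j) ∧ StrictMono (β j) ∧ β j 0 = 0)
    (ψ φ : ℕ → ℝ → ℝ)
    (hψchain : ∀ i < m, ∀ t ≥ (0 : ℝ),
      HasDerivWithinAt (ψ i) (ψ (i + 1) t - α (i + 1) (ψ i t)) (Set.Ici 0) t)
    (hbase : φ 0 = ψ m)
    (hφchain : ∀ j < ma, ∀ t ≥ (0 : ℝ),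
      HasDerivWithinAt (φ j) (φ (j + 1) t - β (j + 1) (φ j t)) (Set.Ici 0) t)
    (htop : ∀ t ≥ (0 : ℝ), 0 ≤ φ ma t)
    (hψinit : ∀ i < m, 0 ≤ ψ i 0)
    (hφinit : ∀ j < ma, 0 ≤ φ j 0) :
    (∀ i < m, ∀ t ≥ (0 : ℝ), 0 ≤ ψ i t) ∧
    (∀ j < ma, ∀ t ≥ (0 : ℝ), 0 ≤ φ j t) ∧
    (∀ t ≥ (0 : ℝ), 0 ≤ ψ 0 t) :=
  fcbf_safety_guarantee_general m ma α β hα hβ ψ φ hψchain hbase hφchain htop hψinit hφinit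
end

section
/- Let u_min < u_max be real numbers, let m_a ≥ 1, and for j ∈ {1, …, m_a} let αⱼ^{min}, αⱼ^{max} : ℝ → ℝ be continuous, strictly increasing functions with value 0 at 0. Let u_f : ℝ → ℝ be a function and define ψ₀^{min}(t) = u_f(t) − u_min and ψ₀^{max}(t) = u_max − u_f(t). Suppose the two chains ψⱼ^{min}(t) = (ψ_{j−1}^{min})'(t) + αⱼ^{min}(ψ_{j−1}^{min}(t)) and ψⱼ^{max}(t) = (ψ_{j−1}^{max})'(t) + αⱼ^{max}(ψ_{j−1}^{max}(t)) are well defined (each ψⱼ^{min}, ψⱼ^{max} with j < m_a is differentiable on [0, ∞)), that ψ_{m_a}^{min}(t) ≥ 0 and ψ_{m_a}^{max}(t) ≥ 0 for all t ≥ 0, and that ψⱼ^{min}(0) ≥ 0 and ψⱼ^{max}(0) ≥ 0 for every j ∈ {0, …, m_a−1}. Then: (1) u_min ≤ u_f(t) ≤ u_max for all t ≥ 0; and (2) u_f is Lipschitz continuous on [0, ∞), namely |u_f(t) − u_f(s)| ≤ L·|t − s| for all t, s ≥ 0, where L = max(α₁^{min}(u_max − u_min), α₁^{max}(u_max − u_min)).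 -/
/-!
Each level of a chain `ψⱼ' = ψⱼ₊₁ - αⱼ₊₁(ψⱼ)` stays nonnegative once the next level does: at
a time where `ψⱼ < 0` we get `αⱼ₊₁(ψⱼ) < 0`, so `ψⱼ` is strictly increasing there and cannot
cross zero from above. Descending from the top level, all levels are nonnegative; level `0`
of both chains gives the bounds on `u_f`. Level `1` of both chains squeezes
`u_f' = ψ₁ᵐⁱⁿ - α₁ᵐⁱⁿ(u_f - u_min) = α₁ᵐᵃˣ(u_max - u_f) - ψ₁ᵐᵃˣ` between
`-α₁ᵐⁱⁿ(u_max - u_min)` and `α₁ᵐᵃˣ(u_max - u_min)`, and the mean value inequality gives the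
Lipschitz bound.
-/

open Set

theorem nonneg_of_hasDerivWithinAt_pos_of_neg {f f' : ℝ → ℝ} {a : ℝ}
    (hf : ∀ x ≥ a, HasDerivWithinAt f (f' x) (Ici a) x)
    (hf' : ∀ x > a, f x < 0 → 0 < f' x) (ha : 0 ≤ f a) :
    ∀ t ≥ a, 0 ≤ f t := by
  intro t hat
  by_contra! hft
  have hcont : ContinuousOn f (Icc a t) := fun x hx =>
    (hf x hx.1).continuousWithinAt.mono Icc_subset_Ici_self
  have hclosed : IsClosed (Icc a t ∩ f ⁻¹' Ici 0) :=
    hcont.preimage_isClosed_of_isClosed isClosed_Icc isClosed_Ici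
  obtain ⟨s, ⟨⟨has, hst⟩, hfs⟩, hlast⟩ :=
    (isCompact_Icc.of_isClosed_subset hclosed inter_subset_left).exists_isGreatest
      ⟨a, left_mem_Icc.2 hat, ha⟩
  have hst : s < t := lt_of_le_of_ne hst (by rintro rfl; exact hft.not_ge hfs)
  have hneg : ∀ x ∈ Ioo s t, f x < 0 := fun x hx => by
    by_contra! hfx
    exact hx.1.not_ge (hlast ⟨⟨has.trans hx.1.le, hx.2.le⟩, hfx⟩)
  have hmono : StrictMonoOn f (Icc s t) := by
    refine strictMonoOn_of_hasDerivWithinAt_pos (f' := f') (convex_Icc s t)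
      (hcont.mono (Icc_subset_Icc_left has)) (fun x hx => ?_) (fun x hx => ?_) <;>
      simp only [interior_Icc] at hx ⊢
    · exact (hf x (has.trans hx.1.le)).mono fun y hy => has.trans hy.1.le
    · exact hf' x (has.trans_lt hx.1) (hneg x hx)
  exact hft.not_gt (hfs.trans_lt (hmono (left_mem_Icc.2 hst.le) (right_mem_Icc.2 hst.le) hst))

theorem hocbf_chain_nonneg_s4 {ma : ℕ} {α ψ : ℕ → ℝ → ℝ}
    (hα : ∀ j, 1 ≤ j → j ≤ ma → ∀ x < 0, α j x < 0)
    (hch : ∀ j < ma, ∀ t ≥ (0 : ℝ),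
      HasDerivWithinAt (ψ j) (ψ (j + 1) t - α (j + 1) (ψ j t)) (Ici 0) t)
    (htop : ∀ t ≥ (0 : ℝ), 0 ≤ ψ ma t) (hinit : ∀ j < ma, 0 ≤ ψ j 0)
    {j : ℕ} (hj : j ≤ ma) : ∀ t ≥ (0 : ℝ), 0 ≤ ψ j t := by
  refine Nat.decreasingInduction (motive := fun j _ => ∀ t ≥ (0 : ℝ), 0 ≤ ψ j t)
    (fun k hk ih => ?_) htop hj
  refine nonneg_of_hasDerivWithinAt_pos_of_neg (hch k hk) (fun x hx hψ => ?_) (hinit k hk)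
  linarith [ih x hx.le, hα (k + 1) k.succ_pos hk _ hψ]

theorem filtered_input_bounds_and_lipschitz_general
    (umin umax : ℝ)
    (ma : ℕ) (hma : 1 ≤ ma)
    (αmin αmax : ℕ → ℝ → ℝ)
    (hαmin : ∀ j, 1 ≤ j → j ≤ ma →
      Continuous (αmin j) ∧ StrictMono (αmin j) ∧ αmin j 0 = 0)
    (hαmax : ∀ j, 1 ≤ j → j ≤ ma →
      Continuous (αmax j) ∧ StrictMono (αmax j) ∧ αmax j 0 = 0)
    (uf : ℝ → ℝ)
    (ψmin ψmax : ℕ → ℝ → ℝ)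
    (hbasemin : ∀ t, ψmin 0 t = uf t - umin)
    (hbasemax : ∀ t, ψmax 0 t = umax - uf t)
    (hchmin : ∀ j < ma, ∀ t ≥ (0 : ℝ),
      HasDerivWithinAt (ψmin j) (ψmin (j + 1) t - αmin (j + 1) (ψmin j t)) (Set.Ici 0) t)
    (hchmax : ∀ j < ma, ∀ t ≥ (0 : ℝ),
      HasDerivWithinAt (ψmax j) (ψmax (j + 1) t - αmax (j + 1) (ψmax j t)) (Set.Ici 0) t)
    (htopmin : ∀ t ≥ (0 : ℝ), 0 ≤ ψmin ma t)
    (htopmax : ∀ t ≥ (0 : ℝ), 0 ≤ ψmax ma t)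
    (hinitmin : ∀ j < ma, 0 ≤ ψmin j 0)
    (hinitmax : ∀ j < ma, 0 ≤ ψmax j 0) :
    (∀ t ≥ (0 : ℝ), umin ≤ uf t ∧ uf t ≤ umax) ∧
    (∀ t ≥ (0 : ℝ), ∀ s ≥ (0 : ℝ),
      |uf t - uf s| ≤
        max (αmin 1 (umax - umin)) (αmax 1 (umax - umin)) * |t - s|) := by
  have hmin : ∀ j ≤ ma, ∀ t ≥ (0 : ℝ), 0 ≤ ψmin j t := fun j => hocbf_chain_nonneg_s4
    (fun j h₁ h₂ x hx => (hαmin j h₁ h₂).2.2 ▸ (hαmin j h₁ h₂).2.1 hx) hchmin htopmin hinitmin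
  have hmax : ∀ j ≤ ma, ∀ t ≥ (0 : ℝ), 0 ≤ ψmax j t := fun j => hocbf_chain_nonneg_s4
    (fun j h₁ h₂ x hx => (hαmax j h₁ h₂).2.2 ▸ (hαmax j h₁ h₂).2.1 hx) hchmax htopmax hinitmax
  have hbounds : ∀ t ≥ (0 : ℝ), umin ≤ uf t ∧ uf t ≤ umax := fun t ht =>
    ⟨by linarith [hmin 0 ma.zero_le t ht, hbasemin t],
      by linarith [hmax 0 ma.zero_le t ht, hbasemax t]⟩
  set L := max (αmin 1 (umax - umin)) (αmax 1 (umax - umin))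
  have hdmin (x : ℝ) (hx : x ∈ Ici (0 : ℝ)) :
      HasDerivWithinAt uf (ψmin 1 x - αmin 1 (ψmin 0 x)) (Ici 0) x :=
    ((hchmin 0 hma x hx).add_const umin).congr_of_mem (fun y _ => by rw [hbasemin]; ring) hx
  have hdmax (x : ℝ) (hx : x ∈ Ici (0 : ℝ)) :
      HasDerivWithinAt uf (αmax 1 (ψmax 0 x) - ψmax 1 x) (Ici 0) x := by
    rw [← neg_sub]
    exact ((hchmax 0 hma x hx).const_sub umax).congr_of_mem (fun y _ => by rw [hbasemax]; ring) hx
  have hderiv_le (x : ℝ) (hx : x ∈ Ici (0 : ℝ)) : ‖ψmin 1 x - αmin 1 (ψmin 0 x)‖ ≤ L := by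
    have heq := (uniqueDiffOn_Ici 0 x hx).eq_deriv _ (hdmin x hx) (hdmax x hx)
    have hlo : αmin 1 (ψmin 0 x) ≤ L := ((hαmin 1 le_rfl hma).2.1.monotone
      (by linarith [hbasemin x, (hbounds x hx).2])).trans (le_max_left _ _)
    have hhi : αmax 1 (ψmax 0 x) ≤ L := ((hαmax 1 le_rfl hma).2.1.monotone
      (by linarith [hbasemax x, (hbounds x hx).1])).trans (le_max_right _ _)
    rw [Real.norm_eq_abs, abs_le]
    constructor <;> linarith [hmin 1 hma x hx, hmax 1 hma x hx]
  refine ⟨hbounds, fun t ht s hs => ?_⟩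
  simpa only [Real.norm_eq_abs] using
    (convex_Ici 0).norm_image_sub_le_of_norm_hasDerivWithin_le hdmin hderiv_le hs ht

/-- Theorem 3 (scalar component). Input-bound HOCBF chains built on
`ψmin 0 = u_f - u_min` and `ψmax 0 = u_max - u_f` of relative degree `m_a`:
if their topmost levels are nonnegative for all `t ≥ 0` and all lower levels are
nonnegative at `t = 0`, then `u_min ≤ u_f t ≤ u_max` for all `t ≥ 0`, and `u_f` is
Lipschitz continuous on `[0, ∞)` with constant
`L = max (αmin 1 (u_max - u_min)) (αmax 1 (u_max - u_min))`. -/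
theorem filtered_input_bounds_and_lipschitz
    (umin umax : ℝ) (hlt : umin < umax)
    (ma : ℕ) (hma : 1 ≤ ma)
    (αmin αmax : ℕ → ℝ → ℝ)
    (hαmin : ∀ j, 1 ≤ j → j ≤ ma →
      Continuous (αmin j) ∧ StrictMono (αmin j) ∧ αmin j 0 = 0)
    (hαmax : ∀ j, 1 ≤ j → j ≤ ma →
      Continuous (αmax j) ∧ StrictMono (αmax j) ∧ αmax j 0 = 0)
    (uf : ℝ → ℝ)
    (ψmin ψmax : ℕ → ℝ → ℝ)
    (hbasemin : ∀ t, ψmin 0 t = uf t - umin)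
    (hbasemax : ∀ t, ψmax 0 t = umax - uf t)
    (hchmin : ∀ j < ma, ∀ t ≥ (0 : ℝ),
      HasDerivWithinAt (ψmin j) (ψmin (j + 1) t - αmin (j + 1) (ψmin j t)) (Set.Ici 0) t)
    (hchmax : ∀ j < ma, ∀ t ≥ (0 : ℝ),
      HasDerivWithinAt (ψmax j) (ψmax (j + 1) t - αmax (j + 1) (ψmax j t)) (Set.Ici 0) t)
    (htopmin : ∀ t ≥ (0 : ℝ), 0 ≤ ψmin ma t)
    (htopmax : ∀ t ≥ (0 : ℝ), 0 ≤ ψmax ma t)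
    (hinitmin : ∀ j < ma, 0 ≤ ψmin j 0)
    (hinitmax : ∀ j < ma, 0 ≤ ψmax j 0) :
    (∀ t ≥ (0 : ℝ), umin ≤ uf t ∧ uf t ≤ umax) ∧
    (∀ t ≥ (0 : ℝ), ∀ s ≥ (0 : ℝ),
      |uf t - uf s| ≤
        max (αmin 1 (umax - umin)) (αmax 1 (umax - umin)) * |t - s|) :=
  filtered_input_bounds_and_lipschitz_general umin umax ma hma αmin αmax hαmin hαmax uf ψmin ψmax
    hbasemin hbasemax hchmin hchmax htopmin htopmax hinitmin hinitmax
end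

section
/- Let m ≥ 1, m_a ≥ 1, q ≥ 1, and u_min, u_max ∈ ℝ^q with u_min < u_max componentwise. For i ∈ {1, …, m} let αᵢ : ℝ → ℝ, for j ∈ {1, …, m_a} let βⱼ : ℝ → ℝ, and for each k ∈ {1, …, q} and j ∈ {1, …, m_a} let γ_{k,j}^{min}, γ_{k,j}^{max} : ℝ → ℝ, all continuous, strictly increasing with value 0 at 0. Let u_f : ℝ → ℝ^q, let ψ₀, …, ψₘ : ℝ → ℝ and φ₀, …, φ_{m_a} : ℝ → ℝ satisfy the glued chains ψ_{i+1}(t) = ψᵢ'(t) + α_{i+1}(ψᵢ(t)), φ₀ = ψₘ, φ_{j+1}(t) = φⱼ'(t) + β_{j+1}(φⱼ(t)) (all lower-level functions differentiable on [0, ∞)), with φ_{m_a}(t) ≥ 0 for all t ≥ 0 and ψᵢ(0) ≥ 0, φⱼ(0) ≥ 0 for all i < m, j < m_a. In addition, for each component k suppose the chains generated by b_k^{min}(t) = u_{f,k}(t) − u_{min,k} and b_k^{max}(t) = u_{max,k} − u_{f,k}(t) via the class κ functions γ_{k,j}^{min}, γ_{k,j}^{max} satisfy nonnegativity of their m_a-th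 level for all t ≥ 0 and nonnegativity of levels 0, …, m_a−1 at t = 0. Then for all t ≥ 0: ψ₀(t) ≥ 0; u_{min,k} ≤ u_{f,k}(t) ≤ u_{max,k} for every k; and each component u_{f,k} is Lipschitz continuous on [0, ∞) with constant L_k = max(γ_{k,1}^{min}(u_{max,k} − u_{min,k}), γ_{k,1}^{max}(u_{max,k} − u_{min,k})), so u_f is Lipschitz continuous as a vector-valued function. -/
/-!
Each level of a barrier chain is forward invariant: if `b' = c - κ b` with `c ≥ 0` and `κ` of
class κ, then `b' ≥ 0` wherever `b < 0`, so `b` cannot leave `[0, ∞)` once it starts there.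
Descending through the FCBF chain and then the HOCBF chain (glued at `φ 0 = ψ m`) gives safety;
descending through the input-bound chains gives the bounds. Since `b_k^min + b_k^max` is the
constant `u_max,k - u_min,k`, the two first-level equations describe the same derivative
`u̇_f,k`, which they squeeze between `-γmin k 1 (u_max,k - u_min,k)` and
`γmax k 1 (u_max,k - u_min,k)`; the mean value theorem turns this into the Lipschitz bound.
-/

open Set

theorem nonneg_of_hasDerivWithinAt_nonneg_of_neg_s6 {f f' : ℝ → ℝ}
    (hf : ∀ t ≥ (0 : ℝ), HasDerivWithinAt f (f' t) (Ici 0) t)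
    (hf' : ∀ t > (0 : ℝ), f t < 0 → 0 ≤ f' t) (h0 : 0 ≤ f 0) :
    ∀ t ≥ (0 : ℝ), 0 ≤ f t := by
  intro T hT
  by_contra! hfT
  have hcont : ContinuousOn f (Icc 0 T) := fun t ht =>
    (hf t ht.1).continuousWithinAt.mono Icc_subset_Ici_self
  have hA : IsCompact (Icc 0 T ∩ f ⁻¹' Ici 0) :=
    isCompact_Icc.of_isClosed_subset
      (hcont.preimage_isClosed_of_isClosed isClosed_Icc isClosed_Ici) inter_subset_left
  -- `s` is the last time in `[0, T]` at which `f` is nonnegative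
  obtain ⟨s, ⟨⟨hs0, hsT⟩, hfs : 0 ≤ f s⟩, hs_last⟩ := hA.exists_isGreatest ⟨0, ⟨le_rfl, hT⟩, h0⟩
  have hsT' : s < T := hsT.lt_of_ne (by rintro rfl; exact (hfs.trans_lt hfT).false)
  have hneg : ∀ t ∈ Ioc s T, f t < 0 := fun t ht =>
    not_le.1 fun hft => ht.1.not_ge (hs_last ⟨⟨hs0.trans ht.1.le, ht.2⟩, hft⟩)
  have hmono : MonotoneOn f (Icc s T) := by
    refine monotoneOn_of_hasDerivWithinAt_nonneg (f' := f') (convex_Icc s T)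
      (hcont.mono (Icc_subset_Icc_left hs0)) (fun t ht => ?_) (fun t ht => ?_)
    all_goals
      rw [interior_Icc] at ht
      have ht0 : 0 < t := hs0.trans_lt ht.1
    · exact ((hf t ht0.le).hasDerivAt (Ici_mem_nhds ht0)).hasDerivWithinAt
    · exact hf' t ht0 (hneg t ⟨ht.1, ht.2.le⟩)
  linarith [hmono ⟨le_rfl, hsT⟩ ⟨hsT, le_rfl⟩ hsT]

/-- The chain `χ (j + 1) = χ j' + κ (j + 1) (χ j)` for `j < n`, on the time interval `[0, ∞)`. -/
def IsBarrierChain (n : ℕ) (κ χ : ℕ → ℝ → ℝ) : Prop :=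
  ∀ j < n, ∀ t ≥ (0 : ℝ), HasDerivWithinAt (χ j) (χ (j + 1) t - κ (j + 1) (χ j t)) (Ici 0) t

theorem IsBarrierChain.nonneg {n : ℕ} {κ χ : ℕ → ℝ → ℝ} (hχ : IsBarrierChain n κ χ)
    (hκ : ∀ j, 1 ≤ j → j ≤ n → StrictMono (κ j) ∧ κ j 0 = 0)
    (htop : ∀ t ≥ (0 : ℝ), 0 ≤ χ n t) (hinit : ∀ j < n, 0 ≤ χ j 0) :
    ∀ j ≤ n, ∀ t ≥ (0 : ℝ), 0 ≤ χ j t := by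
  intro j hj
  induction hj using Nat.decreasingInduction with
  | self => exact htop
  | of_succ j hjn ih =>
    obtain ⟨hmono, hzero⟩ := hκ (j + 1) (by omega) hjn
    refine nonneg_of_hasDerivWithinAt_nonneg_of_neg_s6 (hχ j hjn) (fun t ht hneg => ?_) (hinit j hjn)
    have : κ (j + 1) (χ j t) < 0 := hzero ▸ hmono hneg
    linarith [ih t ht.le]

theorem hasDerivWithinAt_mem_Icc_of_add_eq_const {x y γx γy : ℝ → ℝ} {x₁ y₁ c t : ℝ}
    {s : Set ℝ} (hs : UniqueDiffWithinAt ℝ s t) (hγx : Monotone γx) (hγy : Monotone γy)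
    (hsum : ∀ τ, x τ + y τ = c)
    (hx : HasDerivWithinAt x (x₁ - γx (x t)) s t) (hy : HasDerivWithinAt y (y₁ - γy (y t)) s t)
    (hx0 : 0 ≤ x t) (hy0 : 0 ≤ y t) (hx₁ : 0 ≤ x₁) (hy₁ : 0 ≤ y₁) :
    x₁ - γx (x t) ∈ Icc (-γx c) (γy c) := by
  have hy' : HasDerivWithinAt y (-(x₁ - γx (x t))) s t := by
    have hyx : y = fun τ => c - x τ := funext fun τ => by linarith [hsum τ]
    exact hyx ▸ hx.const_sub c
  have hderiv : -(x₁ - γx (x t)) = y₁ - γy (y t) := hs.eq_deriv _ hy' hy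
  have hxc := hγx (show x t ≤ c by linarith [hsum t])
  have hyc := hγy (show y t ≤ c by linarith [hsum t])
  constructor <;> linarith

theorem abs_sub_le_of_barrier_pair {x y x₁ y₁ γx γy : ℝ → ℝ} {c : ℝ}
    (hγx : Monotone γx) (hγy : Monotone γy) (hsum : ∀ τ, x τ + y τ = c)
    (hx : ∀ t ≥ (0 : ℝ), HasDerivWithinAt x (x₁ t - γx (x t)) (Ici 0) t)
    (hy : ∀ t ≥ (0 : ℝ), HasDerivWithinAt y (y₁ t - γy (y t)) (Ici 0) t)
    (hx0 : ∀ t ≥ (0 : ℝ), 0 ≤ x t) (hy0 : ∀ t ≥ (0 : ℝ), 0 ≤ y t)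
    (hx₁ : ∀ t ≥ (0 : ℝ), 0 ≤ x₁ t) (hy₁ : ∀ t ≥ (0 : ℝ), 0 ≤ y₁ t) :
    ∀ t ≥ (0 : ℝ), ∀ s ≥ (0 : ℝ), |x t - x s| ≤ max (γx c) (γy c) * |t - s| := by
  have hbound : ∀ t ∈ Ici (0 : ℝ), ‖x₁ t - γx (x t)‖ ≤ max (γx c) (γy c) := by
    intro t ht
    obtain ⟨hlo, hhi⟩ := hasDerivWithinAt_mem_Icc_of_add_eq_const (uniqueDiffOn_Ici 0 t ht)
      hγx hγy hsum (hx t ht) (hy t ht) (hx0 t ht) (hy0 t ht) (hx₁ t ht) (hy₁ t ht)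
    exact abs_le.2 ⟨by linarith [le_max_left (γx c) (γy c)], hhi.trans (le_max_right _ _)⟩
  intro t ht s hs
  exact (convex_Ici 0).norm_image_sub_le_of_norm_hasDerivWithin_le hx hbound hs ht

theorem norm_sub_le_sum_mul_of_forall_abs_sub_le {ι : Type*} [Fintype ι] {S : Set ℝ}
    {f : ℝ → ι → ℝ} {L : ι → ℝ} (hL : ∀ k, 0 ≤ L k)
    (hf : ∀ k, ∀ t ∈ S, ∀ s ∈ S, |f t k - f s k| ≤ L k * |t - s|) :
    ∀ t ∈ S, ∀ s ∈ S, ‖f t - f s‖ ≤ (∑ k, L k) * |t - s| := by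
  intro t ht s hs
  have hsum : 0 ≤ ∑ k, L k := Finset.sum_nonneg fun k _ => hL k
  refine (pi_norm_le_iff_of_nonneg (mul_nonneg hsum (abs_nonneg _))).2 fun k => ?_
  calc ‖(f t - f s) k‖ = |f t k - f s k| := Real.norm_eq_abs _
    _ ≤ L k * |t - s| := hf k t ht s hs
    _ ≤ (∑ k, L k) * |t - s| := by
      gcongr
      exact Finset.single_le_sum (fun k _ => hL k) (Finset.mem_univ k)

theorem fcbf_corollary_safety_bounds_lipschitz_general
    (m ma q : ℕ) (hma : 1 ≤ ma)
    (umin umax : Fin q → ℝ)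
    (α β : ℕ → ℝ → ℝ)
    (γmin γmax : Fin q → ℕ → ℝ → ℝ)
    (hα : ∀ i, 1 ≤ i → i ≤ m →
      Continuous (α i) ∧ StrictMono (α i) ∧ α i 0 = 0)
    (hβ : ∀ j, 1 ≤ j → j ≤ ma →
      Continuous (β j) ∧ StrictMono (β j) ∧ β j 0 = 0)
    (hγmin : ∀ k, ∀ j, 1 ≤ j → j ≤ ma →
      Continuous (γmin k j) ∧ StrictMono (γmin k j) ∧ γmin k j 0 = 0)
    (hγmax : ∀ k, ∀ j, 1 ≤ j → j ≤ ma →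
      Continuous (γmax k j) ∧ StrictMono (γmax k j) ∧ γmax k j 0 = 0)
    (uf : ℝ → Fin q → ℝ)
    (ψ φ : ℕ → ℝ → ℝ)
    (hψchain : ∀ i < m, ∀ t ≥ (0 : ℝ),
      HasDerivWithinAt (ψ i) (ψ (i + 1) t - α (i + 1) (ψ i t)) (Set.Ici 0) t)
    (hbase : φ 0 = ψ m)
    (hφchain : ∀ j < ma, ∀ t ≥ (0 : ℝ),
      HasDerivWithinAt (φ j) (φ (j + 1) t - β (j + 1) (φ j t)) (Set.Ici 0) t)
    (htop : ∀ t ≥ (0 : ℝ), 0 ≤ φ ma t)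
    (hψinit : ∀ i < m, 0 ≤ ψ i 0)
    (hφinit : ∀ j < ma, 0 ≤ φ j 0)
    (χmin χmax : Fin q → ℕ → ℝ → ℝ)
    (hχbasemin : ∀ k, ∀ t, χmin k 0 t = uf t k - umin k)
    (hχbasemax : ∀ k, ∀ t, χmax k 0 t = umax k - uf t k)
    (hχchmin : ∀ k, ∀ j < ma, ∀ t ≥ (0 : ℝ),
      HasDerivWithinAt (χmin k j)
        (χmin k (j + 1) t - γmin k (j + 1) (χmin k j t)) (Set.Ici 0) t)
    (hχchmax : ∀ k, ∀ j < ma, ∀ t ≥ (0 : ℝ),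
      HasDerivWithinAt (χmax k j)
        (χmax k (j + 1) t - γmax k (j + 1) (χmax k j t)) (Set.Ici 0) t)
    (hχtopmin : ∀ k, ∀ t ≥ (0 : ℝ), 0 ≤ χmin k ma t)
    (hχtopmax : ∀ k, ∀ t ≥ (0 : ℝ), 0 ≤ χmax k ma t)
    (hχinitmin : ∀ k, ∀ j < ma, 0 ≤ χmin k j 0)
    (hχinitmax : ∀ k, ∀ j < ma, 0 ≤ χmax k j 0) :
    (∀ t ≥ (0 : ℝ), 0 ≤ ψ 0 t) ∧
    (∀ t ≥ (0 : ℝ), ∀ k, umin k ≤ uf t k ∧ uf t k ≤ umax k) ∧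
    (∀ k, ∀ t ≥ (0 : ℝ), ∀ s ≥ (0 : ℝ),
      |uf t k - uf s k| ≤
        max (γmin k 1 (umax k - umin k)) (γmax k 1 (umax k - umin k)) * |t - s|) ∧
    (∃ L : ℝ, 0 ≤ L ∧ ∀ t ≥ (0 : ℝ), ∀ s ≥ (0 : ℝ),
      ‖uf t - uf s‖ ≤ L * |t - s|) := by
  have hφ := IsBarrierChain.nonneg hφchain (fun j h₁ h₂ => (hβ j h₁ h₂).2) htop hφinit
  have hψ := IsBarrierChain.nonneg hψchain (fun i h₁ h₂ => (hα i h₁ h₂).2)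
    (hbase ▸ hφ 0 ma.zero_le) hψinit
  have hmin : ∀ k, ∀ j ≤ ma, ∀ t ≥ (0 : ℝ), 0 ≤ χmin k j t := fun k =>
    IsBarrierChain.nonneg (hχchmin k) (fun j h₁ h₂ => (hγmin k j h₁ h₂).2) (hχtopmin k)
      (hχinitmin k)
  have hmax : ∀ k, ∀ j ≤ ma, ∀ t ≥ (0 : ℝ), 0 ≤ χmax k j t := fun k =>
    IsBarrierChain.nonneg (hχchmax k) (fun j h₁ h₂ => (hγmax k j h₁ h₂).2) (hχtopmax k)
      (hχinitmax k)
  have hbounds : ∀ t ≥ (0 : ℝ), ∀ k, umin k ≤ uf t k ∧ uf t k ≤ umax k := fun t ht k => by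
    have hlo := hχbasemin k t ▸ hmin k 0 ma.zero_le t ht
    have hhi := hχbasemax k t ▸ hmax k 0 ma.zero_le t ht
    constructor <;> linarith
  have hlip : ∀ k, ∀ t ≥ (0 : ℝ), ∀ s ≥ (0 : ℝ), |uf t k - uf s k| ≤
      max (γmin k 1 (umax k - umin k)) (γmax k 1 (umax k - umin k)) * |t - s| := by
    intro k t ht s hs
    have hlip₀ := abs_sub_le_of_barrier_pair (c := umax k - umin k)
      (hγmin k 1 le_rfl hma).2.1.monotone (hγmax k 1 le_rfl hma).2.1.monotone
      (fun τ => by rw [hχbasemin, hχbasemax]; ring) (hχchmin k 0 hma) (hχchmax k 0 hma)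
      (hmin k 0 ma.zero_le) (hmax k 0 ma.zero_le) (hmin k 1 hma) (hmax k 1 hma) t ht s hs
    rwa [hχbasemin, hχbasemin, sub_sub_sub_cancel_right] at hlip₀
  -- nonnegative because it bounds `|uf 1 k - uf 0 k|`
  have hL : ∀ k, 0 ≤ max (γmin k 1 (umax k - umin k)) (γmax k 1 (umax k - umin k)) := fun k =>
    (abs_nonneg _).trans (by simpa using hlip k 1 zero_le_one 0 le_rfl)
  exact ⟨hψ 0 m.zero_le, hbounds, hlip, _, Finset.sum_nonneg fun k _ => hL k,
    norm_sub_le_sum_mul_of_forall_abs_sub_le (S := Ici 0) hL hlip⟩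

/-- Corollary 1 (consequence of Theorems 2 and 3). Glued HOCBF/FCBF chains `ψ`, `φ`
(with `φ 0 = ψ m`) together with componentwise input-bound chains generated by
`u_{f,k} - u_{min,k}` and `u_{max,k} - u_{f,k}` yield simultaneously: safety `ψ 0 t ≥ 0`,
satisfaction of the input bounds `u_min ≤ u_f t ≤ u_max` componentwise, componentwise
Lipschitz continuity of `u_f` with constant
`L_k = max (γmin k 1 (u_max k - u_min k)) (γmax k 1 (u_max k - u_min k))`, and hence
Lipschitz continuity of `u_f` as a vector-valued function. -/
theorem fcbf_corollary_safety_bounds_lipschitz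
    (m ma q : ℕ) (hm : 1 ≤ m) (hma : 1 ≤ ma) (hq : 1 ≤ q)
    (umin umax : Fin q → ℝ) (hlt : ∀ k, umin k < umax k)
    (α β : ℕ → ℝ → ℝ)
    (γmin γmax : Fin q → ℕ → ℝ → ℝ)
    (hα : ∀ i, 1 ≤ i → i ≤ m →
      Continuous (α i) ∧ StrictMono (α i) ∧ α i 0 = 0)
    (hβ : ∀ j, 1 ≤ j → j ≤ ma →
      Continuous (β j) ∧ StrictMono (β j) ∧ β j 0 = 0)
    (hγmin : ∀ k, ∀ j, 1 ≤ j → j ≤ ma →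
      Continuous (γmin k j) ∧ StrictMono (γmin k j) ∧ γmin k j 0 = 0)
    (hγmax : ∀ k, ∀ j, 1 ≤ j → j ≤ ma →
      Continuous (γmax k j) ∧ StrictMono (γmax k j) ∧ γmax k j 0 = 0)
    (uf : ℝ → Fin q → ℝ)
    (ψ φ : ℕ → ℝ → ℝ)
    (hψchain : ∀ i < m, ∀ t ≥ (0 : ℝ),
      HasDerivWithinAt (ψ i) (ψ (i + 1) t - α (i + 1) (ψ i t)) (Set.Ici 0) t)
    (hbase : φ 0 = ψ m)
    (hφchain : ∀ j < ma, ∀ t ≥ (0 : ℝ),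
      HasDerivWithinAt (φ j) (φ (j + 1) t - β (j + 1) (φ j t)) (Set.Ici 0) t)
    (htop : ∀ t ≥ (0 : ℝ), 0 ≤ φ ma t)
    (hψinit : ∀ i < m, 0 ≤ ψ i 0)
    (hφinit : ∀ j < ma, 0 ≤ φ j 0)
    (χmin χmax : Fin q → ℕ → ℝ → ℝ)
    (hχbasemin : ∀ k, ∀ t, χmin k 0 t = uf t k - umin k)
    (hχbasemax : ∀ k, ∀ t, χmax k 0 t = umax k - uf t k)
    (hχchmin : ∀ k, ∀ j < ma, ∀ t ≥ (0 : ℝ),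
      HasDerivWithinAt (χmin k j)
        (χmin k (j + 1) t - γmin k (j + 1) (χmin k j t)) (Set.Ici 0) t)
    (hχchmax : ∀ k, ∀ j < ma, ∀ t ≥ (0 : ℝ),
      HasDerivWithinAt (χmax k j)
        (χmax k (j + 1) t - γmax k (j + 1) (χmax k j t)) (Set.Ici 0) t)
    (hχtopmin : ∀ k, ∀ t ≥ (0 : ℝ), 0 ≤ χmin k ma t)
    (hχtopmax : ∀ k, ∀ t ≥ (0 : ℝ), 0 ≤ χmax k ma t)
    (hχinitmin : ∀ k, ∀ j < ma, 0 ≤ χmin k j 0)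
    (hχinitmax : ∀ k, ∀ j < ma, 0 ≤ χmax k j 0) :
    (∀ t ≥ (0 : ℝ), 0 ≤ ψ 0 t) ∧
    (∀ t ≥ (0 : ℝ), ∀ k, umin k ≤ uf t k ∧ uf t k ≤ umax k) ∧
    (∀ k, ∀ t ≥ (0 : ℝ), ∀ s ≥ (0 : ℝ),
      |uf t k - uf s k| ≤
        max (γmin k 1 (umax k - umin k)) (γmax k 1 (umax k - umin k)) * |t - s|) ∧
    (∃ L : ℝ, 0 ≤ L ∧ ∀ t ≥ (0 : ℝ), ∀ s ≥ (0 : ℝ),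
      ‖uf t - uf s‖ ≤ L * |t - s|) :=
  fcbf_corollary_safety_bounds_lipschitz_general m ma q hma umin umax α β γmin γmax hα hβ hγmin
    hγmax uf ψ φ hψchain hbase hφchain htop hψinit hφinit χmin χmax hχbasemin hχbasemax hχchmin
    hχchmax hχtopmin hχtopmax hχinitmin hχinitmax
end

section
/- Let τ > 0, u_min < u_max, and κ^{min} ≥ 0, κ^{max} ≥ 0 be real numbers. Let ν, u_f : ℝ → ℝ with u_f differentiable on [0, ∞) and satisfying the first-order low-pass filter dynamics u_f'(t) = (ν(t) − u_f(t))/τ for all t ≥ 0. Suppose for all t ≥ 0 the first-order barrier inequalities (ν(t) − u_f(t))/τ + κ^{min}(u_f(t) − u_min) ≥ 0 and −(ν(t) − u_f(t))/τ + κ^{max}(u_max − u_f(t)) ≥ 0 hold, and that u_min ≤ u_f(0) ≤ u_max. Then u_min ≤ u_f(t) ≤ u_max for all t ≥ 0, and u_f is Lipschitz continuous on [0, ∞) with |u_f(t) − u_f(s)| ≤ max(κ^{min}, κ^{max})·(u_max − u_min)·|t − s| for all t, s ≥ 0. -/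
/-!
The barrier inequality `b' + κ b ≥ 0` says exactly that `t ↦ exp (κ t) b t` is nondecreasing, so a
barrier function that starts nonnegative stays nonnegative; applied to `u_f - u_min` and
`u_max - u_f` this keeps `u_f` in `[u_min, u_max]`. On that interval the two barrier inequalities
trap `u_f'` between `-κ^min (u_max - u_min)` and `κ^max (u_max - u_min)`, and the mean value
inequality turns this derivative bound into the Lipschitz estimate.
-/

open Set Real

theorem monotoneOn_exp_mul_of_barrier {b b' : ℝ → ℝ} {κ t₀ : ℝ}
    (hb : ∀ t ≥ t₀, HasDerivWithinAt b (b' t) (Ici t₀) t)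
    (hbarrier : ∀ t ≥ t₀, 0 ≤ b' t + κ * b t) :
    MonotoneOn (fun t => exp (κ * t) * b t) (Ici t₀) := by
  have hexp : ∀ t, HasDerivAt (fun t => exp (κ * t)) (exp (κ * t) * κ) t := fun t => by
    simpa using ((hasDerivAt_id t).const_mul κ).exp
  have hderiv : ∀ t ≥ t₀, HasDerivWithinAt (fun t => exp (κ * t) * b t)
      (exp (κ * t) * (b' t + κ * b t)) (Ici t₀) t := fun t ht =>
    ((hexp t).hasDerivWithinAt.mul (hb t ht)).congr_deriv (by ring)
  refine monotoneOn_of_hasDerivWithinAt_nonneg (convex_Ici t₀)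
    (fun t ht => (hderiv t ht).continuousWithinAt)
    (fun t ht => (hderiv t (interior_subset ht)).mono interior_subset)
    fun t ht => mul_nonneg (exp_nonneg _) (hbarrier t (interior_subset ht))

theorem nonneg_of_barrier {b b' : ℝ → ℝ} {κ t₀ : ℝ}
    (hb : ∀ t ≥ t₀, HasDerivWithinAt b (b' t) (Ici t₀) t)
    (hbarrier : ∀ t ≥ t₀, 0 ≤ b' t + κ * b t) (h₀ : 0 ≤ b t₀) :
    ∀ t ≥ t₀, 0 ≤ b t := by
  intro t ht
  have hmono := monotoneOn_exp_mul_of_barrier hb hbarrier self_mem_Ici ht ht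
  exact nonneg_of_mul_nonneg_right (le_trans (by positivity) hmono) (exp_pos _)

theorem abs_le_max_mul_of_barriers {d x a c κa κc : ℝ} (hκa : 0 ≤ κa) (hκc : 0 ≤ κc)
    (hax : a ≤ x) (hxc : x ≤ c) (hlow : 0 ≤ d + κa * (x - a)) (hup : 0 ≤ -d + κc * (c - x)) :
    |d| ≤ max κa κc * (c - a) := by
  have hκa' : κa * (x - a) ≤ max κa κc * (c - a) :=
    mul_le_mul (le_max_left _ _) (by linarith) (by linarith) (hκa.trans (le_max_left _ _))
  have hκc' : κc * (c - x) ≤ max κa κc * (c - a) :=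
    mul_le_mul (le_max_right _ _) (by linarith) (by linarith) (hκc.trans (le_max_right _ _))
  rw [abs_le]
  constructor <;> linarith

theorem low_pass_filter_bounds_and_lipschitz_general
    (τ : ℝ)
    (umin umax : ℝ)
    (κmin κmax : ℝ) (hκmin : 0 ≤ κmin) (hκmax : 0 ≤ κmax)
    (ν uf : ℝ → ℝ)
    (hderiv : ∀ t ≥ (0 : ℝ),
      HasDerivWithinAt uf ((ν t - uf t) / τ) (Set.Ici 0) t)
    (hmin : ∀ t ≥ (0 : ℝ), 0 ≤ (ν t - uf t) / τ + κmin * (uf t - umin))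
    (hmax : ∀ t ≥ (0 : ℝ), 0 ≤ -((ν t - uf t) / τ) + κmax * (umax - uf t))
    (hinit : umin ≤ uf 0 ∧ uf 0 ≤ umax) :
    (∀ t ≥ (0 : ℝ), umin ≤ uf t ∧ uf t ≤ umax) ∧
    (∀ t ≥ (0 : ℝ), ∀ s ≥ (0 : ℝ),
      |uf t - uf s| ≤ max κmin κmax * (umax - umin) * |t - s|) := by
  have hbounds : ∀ t ≥ (0 : ℝ), umin ≤ uf t ∧ uf t ≤ umax := fun t ht =>
    ⟨sub_nonneg.1 <| nonneg_of_barrier (fun t ht => (hderiv t ht).sub_const umin) hmin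
        (sub_nonneg.2 hinit.1) t ht,
      sub_nonneg.1 <| nonneg_of_barrier (fun t ht => (hderiv t ht).const_sub umax) hmax
        (sub_nonneg.2 hinit.2) t ht⟩
  refine ⟨hbounds, fun t ht s hs => ?_⟩
  have hslope : ∀ x ∈ Ici (0 : ℝ), ‖(ν x - uf x) / τ‖ ≤ max κmin κmax * (umax - umin) :=
    fun x hx => abs_le_max_mul_of_barriers hκmin hκmax (hbounds x hx).1 (hbounds x hx).2
      (hmin x hx) (hmax x hx)
  simpa only [Real.norm_eq_abs] using
    (convex_Ici 0).norm_image_sub_le_of_norm_hasDerivWithin_le hderiv hslope hs ht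

/-- Corollary 2 (per component, first-order low-pass filter). Under the filter dynamics
`u_f' t = (ν t - u_f t) / τ` and the first-order input-bound barrier inequalities with
linear class κ functions `s ↦ κ^min s`, `s ↦ κ^max s`, the filtered input stays in
`[u_min, u_max]` and is Lipschitz continuous with constant
`max κ^min κ^max * (u_max - u_min)`. -/
theorem low_pass_filter_bounds_and_lipschitz
    (τ : ℝ) (hτ : 0 < τ)
    (umin umax : ℝ) (hlt : umin < umax)
    (κmin κmax : ℝ) (hκmin : 0 ≤ κmin) (hκmax : 0 ≤ κmax)
    (ν uf : ℝ → ℝ)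
    (hderiv : ∀ t ≥ (0 : ℝ),
      HasDerivWithinAt uf ((ν t - uf t) / τ) (Set.Ici 0) t)
    (hmin : ∀ t ≥ (0 : ℝ), 0 ≤ (ν t - uf t) / τ + κmin * (uf t - umin))
    (hmax : ∀ t ≥ (0 : ℝ), 0 ≤ -((ν t - uf t) / τ) + κmax * (umax - uf t))
    (hinit : umin ≤ uf 0 ∧ uf 0 ≤ umax) :
    (∀ t ≥ (0 : ℝ), umin ≤ uf t ∧ uf t ≤ umax) ∧
    (∀ t ≥ (0 : ℝ), ∀ s ≥ (0 : ℝ),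
      |uf t - uf s| ≤ max κmin κmax * (umax - umin) * |t - s|) :=
  low_pass_filter_bounds_and_lipschitz_general τ umin umax κmin κmax hκmin hκmax ν uf hderiv hmin
    hmax hinit
end

section
/- Let v, x_o, y_o, r_o, k₁, k₂ ∈ ℝ with k₁ > 0 and k₂ > 0. Let x, y, θ : ℝ → ℝ and u : ℝ → ℝ with x, y, θ differentiable, u continuous, satisfying x'(t) = v·cos(θ(t)), y'(t) = v·sin(θ(t)), θ'(t) = u(t) for all t ≥ 0. Define b(t) = (x(t) − x_o)² + (y(t) − y_o)² − r_o². Suppose for all t ≥ 0 the second-order HOCBF inequality (2(y(t) − y_o)·v·cos(θ(t)) − 2(x(t) − x_o)·v·sin(θ(t)))·u(t) + 2v² + (k₁ + k₂)·b'(t) + k₁k₂·b(t) ≥ 0 holds, and that b(0) ≥ 0 and b'(0) + k₁·b(0) ≥ 0. Then b(t) ≥ 0 for all t ≥ 0, i.e., (x(t) − x_o)² + (y(t) − y_o)² ≥ r_o² and the vehicle never enters the obstacle. -/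
/-!
Along every solution, `b'' = 2 v² + (2 (y - y_o) v cos θ - 2 (x - x_o) v sin θ) u`, because
`cos² θ + sin² θ = 1`, so the hypothesis is `ψ₂ = ψ₁' + k₂ ψ₁ ≥ 0` for `ψ₁ = b' + k₁ b`.
Multiplying by `exp (k t)` turns `f' + k f ≥ 0` into monotonicity of `f · exp (k t)`, so
`ψ₁ ≥ 0` follows from `ψ₁ 0 ≥ 0`, and then `b ≥ 0` from `b 0 ≥ 0` in the same way.
-/

open Real Set

theorem nonneg_of_hasDerivAt_add_mul_nonneg {f f' : ℝ → ℝ} {a k : ℝ}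
    (hf : ∀ t ≥ a, HasDerivAt f (f' t) t) (h : ∀ t ≥ a, 0 ≤ f' t + k * f t) (ha : 0 ≤ f a) :
    ∀ t ≥ a, 0 ≤ f t := by
  have hg : ∀ t ≥ a, HasDerivAt (fun s => f s * exp (k * s))
      ((f' t + k * f t) * exp (k * t)) t := fun t ht =>
    ((hf t ht).mul (((hasDerivAt_id t).const_mul k).exp)).congr_deriv (by simp; ring)
  have hmono : MonotoneOn (fun s => f s * exp (k * s)) (Ici a) := by
    refine monotoneOn_of_deriv_nonneg (convex_Ici a)
      (fun t ht => (hg t ht).continuousAt.continuousWithinAt)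
      (fun t ht => (hg t (interior_subset ht)).differentiableAt.differentiableWithinAt)
      (fun t ht => ?_)
    have ht : a ≤ t := interior_subset ht
    rw [(hg t ht).deriv]
    exact mul_nonneg (h t ht) (exp_pos _).le
  intro t ht
  have hweighted : 0 ≤ f t * exp (k * t) :=
    (mul_nonneg ha (exp_pos _).le).trans (hmono self_mem_Ici ht ht)
  exact nonneg_of_mul_nonneg_left hweighted (exp_pos _)

/-- Theorem 1 for relative degree two and linear class κ functions `α₁ = k₁ ·`, `α₂ = k₂ ·`. -/
theorem nonneg_of_hocbf_two {b b₁ b₂ : ℝ → ℝ} {a k₁ k₂ : ℝ}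
    (hb : ∀ t ≥ a, HasDerivAt b (b₁ t) t) (hb₁ : ∀ t ≥ a, HasDerivAt b₁ (b₂ t) t)
    (hψ₂ : ∀ t ≥ a, 0 ≤ b₂ t + (k₁ + k₂) * b₁ t + k₁ * k₂ * b t)
    (hb₀ : 0 ≤ b a) (hψ₁₀ : 0 ≤ b₁ a + k₁ * b a) :
    ∀ t ≥ a, 0 ≤ b t := by
  have hψ₁ : ∀ t ≥ a, 0 ≤ b₁ t + k₁ * b t :=
    nonneg_of_hasDerivAt_add_mul_nonneg (f' := fun t => b₂ t + k₁ * b₁ t) (k := k₂)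
      (fun t ht => (hb₁ t ht).add ((hb t ht).const_mul k₁))
      (fun t ht => by linarith [hψ₂ t ht]) hψ₁₀
  exact nonneg_of_hasDerivAt_add_mul_nonneg hb hψ₁ hb₀

section Unicycle

variable {v xo yo ro : ℝ} {x y θ u : ℝ → ℝ}

theorem unicycle_hasDerivAt_barrier (hx : ∀ t, HasDerivAt x (v * cos (θ t)) t)
    (hy : ∀ t, HasDerivAt y (v * sin (θ t)) t) (t : ℝ) :
    HasDerivAt (fun s => (x s - xo) ^ 2 + (y s - yo) ^ 2 - ro ^ 2)
      (2 * (x t - xo) * (v * cos (θ t)) + 2 * (y t - yo) * (v * sin (θ t))) t :=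
  ((((hx t).sub_const xo).pow 2).add (((hy t).sub_const yo).pow 2)).sub_const _
    |>.congr_deriv (by ring)

theorem unicycle_hasDerivAt_barrier_rate (hx : ∀ t, HasDerivAt x (v * cos (θ t)) t)
    (hy : ∀ t, HasDerivAt y (v * sin (θ t)) t) (hθ : ∀ t, HasDerivAt θ (u t) t) (t : ℝ) :
    HasDerivAt (fun s => 2 * (x s - xo) * (v * cos (θ s)) + 2 * (y s - yo) * (v * sin (θ s)))
      (2 * v ^ 2 +
        (2 * (y t - yo) * v * cos (θ t) - 2 * (x t - xo) * v * sin (θ t)) * u t) t := by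
  have hxterm := (((hx t).sub_const xo).const_mul 2).mul ((hθ t).cos.const_mul v)
  have hyterm := (((hy t).sub_const yo).const_mul 2).mul ((hθ t).sin.const_mul v)
  refine (hxterm.add hyterm).congr_deriv ?_
  linear_combination 2 * v ^ 2 * cos_sq_add_sin_sq (θ t)

end Unicycle

theorem unicycle_hocbf_safety_general
    (v xo yo ro k₁ k₂ : ℝ)
    (x y θ u : ℝ → ℝ)
    (hx : ∀ t, HasDerivAt x (v * Real.cos (θ t)) t)
    (hy : ∀ t, HasDerivAt y (v * Real.sin (θ t)) t)
    (hθ : ∀ t, HasDerivAt θ (u t) t)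
    (b : ℝ → ℝ)
    (hb : ∀ t, b t = (x t - xo) ^ 2 + (y t - yo) ^ 2 - ro ^ 2)
    (hineq : ∀ t ≥ (0 : ℝ),
      0 ≤ (2 * (y t - yo) * v * Real.cos (θ t) - 2 * (x t - xo) * v * Real.sin (θ t)) * u t
            + 2 * v ^ 2 + (k₁ + k₂) * deriv b t + k₁ * k₂ * b t)
    (hinit₀ : 0 ≤ b 0)
    (hinit₁ : 0 ≤ deriv b 0 + k₁ * b 0) :
    ∀ t ≥ (0 : ℝ), 0 ≤ b t ∧ ro ^ 2 ≤ (x t - xo) ^ 2 + (y t - yo) ^ 2 := by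
  have hb₁ : ∀ t, HasDerivAt b _ t := funext hb ▸ unicycle_hasDerivAt_barrier hx hy
  have hb₂ := unicycle_hasDerivAt_barrier_rate (xo := xo) (yo := yo) hx hy hθ
  simp only [fun t => (hb₁ t).deriv] at hineq hinit₁
  have hsafe := nonneg_of_hocbf_two (k₂ := k₂) (fun t _ => hb₁ t) (fun t _ => hb₂ t)
    (fun t ht => by linarith [hineq t ht]) hinit₀ hinit₁
  exact fun t ht => ⟨hsafe t ht, sub_nonneg.mp (hb t ▸ hsafe t ht)⟩

/-- HOCBF safety guarantee instantiated for unicycle obstacle avoidance. With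
`b t = (x t - x_o)² + (y t - y_o)² - r_o²` along solutions of
`x' = v cos θ, y' = v sin θ, θ' = u`, if the second-order HOCBF inequality (equation (11))
`(2(y - y_o) v cos θ - 2(x - x_o) v sin θ) u + 2v² + (k₁ + k₂) b' + k₁ k₂ b ≥ 0`
holds for all `t ≥ 0`, with `b 0 ≥ 0` and `b' 0 + k₁ b 0 ≥ 0`, then `b t ≥ 0` for all
`t ≥ 0`, i.e. the vehicle never enters the obstacle. -/
theorem unicycle_hocbf_safety
    (v xo yo ro k₁ k₂ : ℝ) (hk₁ : 0 < k₁) (hk₂ : 0 < k₂)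
    (x y θ u : ℝ → ℝ)
    (hx : ∀ t, HasDerivAt x (v * Real.cos (θ t)) t)
    (hy : ∀ t, HasDerivAt y (v * Real.sin (θ t)) t)
    (hθ : ∀ t, HasDerivAt θ (u t) t)
    (hu : Continuous u)
    (b : ℝ → ℝ)
    (hb : ∀ t, b t = (x t - xo) ^ 2 + (y t - yo) ^ 2 - ro ^ 2)
    (hineq : ∀ t ≥ (0 : ℝ),
      0 ≤ (2 * (y t - yo) * v * Real.cos (θ t) - 2 * (x t - xo) * v * Real.sin (θ t)) * u t
            + 2 * v ^ 2 + (k₁ + k₂) * deriv b t + k₁ * k₂ * b t)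
    (hinit₀ : 0 ≤ b 0)
    (hinit₁ : 0 ≤ deriv b 0 + k₁ * b 0) :
    ∀ t ≥ (0 : ℝ), 0 ≤ b t ∧ ro ^ 2 ≤ (x t - xo) ^ 2 + (y t - yo) ^ 2 :=
  unicycle_hocbf_safety_general v xo yo ro k₁ k₂ x y θ u hx hy hθ b hb hineq hinit₀ hinit₁
end

section
/- Let α : ℝ → ℝ be continuous and strictly increasing with α(0) = 0, let n ≥ 1, let f : ℝⁿ → ℝⁿ and g : ℝⁿ → ℝ^{n×q} be functions, u : ℝ → ℝ^q a control signal, and x : ℝ → ℝⁿ a trajectory satisfying x'(t) = f(x(t)) + g(x(t)) u(t) for all t ≥ 0. Let b : ℝⁿ → ℝ be continuously differentiable and suppose Db(x(t))(f(x(t)) + g(x(t)) u(t)) + α(b(x(t))) ≥ 0 for all t ≥ 0 and b(x(0)) ≥ 0. Then b(x(t)) ≥ 0 for all t ≥ 0, i.e., the set C = {z ∈ ℝⁿ : b(z) ≥ 0} is forward invariant along the trajectory. -/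
/-!
Along the trajectory, `h t = b (x t)` satisfies `h' ≥ -α ∘ h`, and `-α y > 0` whenever `y < 0`.
So `h` is pushed upward as soon as it goes below zero, and it can never cross any level
`-ε < 0`; the fencing theorem with the constant barrier `ε` for `-h` makes this precise.
-/

open Set

theorem nonneg_of_hasDerivAt_add_nonneg {h h' φ : ℝ → ℝ} {a : ℝ}
    (hφ : ∀ y < 0, φ y < 0) (hd : ∀ t ≥ a, HasDerivAt h (h' t) t)
    (hbound : ∀ t ≥ a, 0 ≤ h' t + φ (h t)) (ha : 0 ≤ h a) :
    ∀ t ≥ a, 0 ≤ h t := by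
  intro t ht
  refine le_of_forall_pos_le_add fun ε hε => ?_
  have hfence : ∀ s ∈ Icc a t, -h s ≤ ε := by
    refine image_le_of_deriv_right_lt_deriv_boundary
      (f := fun s => -h s) (f' := fun s => -h' s) (B' := fun _ => 0)
      (fun s hs => (hd s hs.1).continuousAt.neg.continuousWithinAt)
      (fun s hs => (hd s hs.1).neg.hasDerivWithinAt) (by linarith)
      (fun _ => hasDerivAt_const _ ε) fun s hs hs_eq => ?_
    have hφ_neg := hφ (h s) (by linarith)
    linarith [hbound s hs.1, hφ_neg]
  linarith [hfence t ⟨ht, le_rfl⟩]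

theorem cbf_forward_invariance_general
    (α : ℝ → ℝ) (hαm : StrictMono α) (hα0 : α 0 = 0)
    (n q : ℕ)
    (f : (Fin n → ℝ) → (Fin n → ℝ))
    (g : (Fin n → ℝ) → Matrix (Fin n) (Fin q) ℝ)
    (u : ℝ → (Fin q → ℝ)) (x : ℝ → (Fin n → ℝ))
    (hx : ∀ t ≥ (0 : ℝ), HasDerivAt x (f (x t) + (g (x t)).mulVec (u t)) t)
    (b : (Fin n → ℝ) → ℝ) (hb : ContDiff ℝ 1 b)
    (hineq : ∀ t ≥ (0 : ℝ),
      0 ≤ fderiv ℝ b (x t) (f (x t) + (g (x t)).mulVec (u t)) + α (b (x t)))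
    (hinit : 0 ≤ b (x 0)) :
    ∀ t ≥ (0 : ℝ), x t ∈ {z : Fin n → ℝ | 0 ≤ b z} := by
  have hα_neg : ∀ y < 0, α y < 0 := fun y hy => hα0 ▸ hαm hy
  have hchain : ∀ t ≥ (0 : ℝ), HasDerivAt (b ∘ x)
      (fderiv ℝ b (x t) (f (x t) + (g (x t)).mulVec (u t))) t := fun t ht =>
    ((hb.differentiable one_ne_zero (x t)).hasFDerivAt).comp_hasDerivAt t (hx t ht)
  exact nonneg_of_hasDerivAt_add_nonneg hα_neg hchain hineq hinit

/-- Relative-degree-one case of the HOCBF safety guarantee (the classical CBF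
forward-invariance result along a trajectory of `ẋ = f x + g x * u`): if `b` is
continuously differentiable, `Db(x t)(f (x t) + g (x t) * u t) + α (b (x t)) ≥ 0`
for all `t ≥ 0` with `α` extended class κ, and `b (x 0) ≥ 0`, then `b (x t) ≥ 0`
for all `t ≥ 0`, i.e. the set `{z : b z ≥ 0}` is forward invariant along the
trajectory. -/
theorem cbf_forward_invariance
    (α : ℝ → ℝ) (hαc : Continuous α) (hαm : StrictMono α) (hα0 : α 0 = 0)
    (n q : ℕ) (hn : 1 ≤ n)
    (f : (Fin n → ℝ) → (Fin n → ℝ))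
    (g : (Fin n → ℝ) → Matrix (Fin n) (Fin q) ℝ)
    (u : ℝ → (Fin q → ℝ)) (x : ℝ → (Fin n → ℝ))
    (hx : ∀ t ≥ (0 : ℝ), HasDerivAt x (f (x t) + (g (x t)).mulVec (u t)) t)
    (b : (Fin n → ℝ) → ℝ) (hb : ContDiff ℝ 1 b)
    (hineq : ∀ t ≥ (0 : ℝ),
      0 ≤ fderiv ℝ b (x t) (f (x t) + (g (x t)).mulVec (u t)) + α (b (x t)))
    (hinit : 0 ≤ b (x 0)) :
    ∀ t ≥ (0 : ℝ), x t ∈ {z : Fin n → ℝ | 0 ≤ b z} :=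
  cbf_forward_invariance_general α hαm hα0 n q f g u x hx b hb hineq hinit
end
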